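/- If v ∈ S_n contains the increasing pattern 12⋯(k+1) (i.e., there exist i₁ < ⋯ < i_{k+1} with v(i₁) < ⋯ < v(i_{k+1})), then Γ([v, w₀]) contains a (k+1)×(k+1) square region, i.e., there exist r, c such that [r, r+k] × [c, c+k] ⊆ Γ([v,w₀]). -/

import Mathlib

open Equiv Finset
open scoped Classical

/-- Bruhat order on the symmetric group on `Fin n`, via the rank-matrix
characterization: `v ≤ w` iff every northeast corner count of `v` is at most
that of `w`. -/
def bruhatLE {n : ℕ} (v w : Equiv.Perm (Fin n)) : Prop :=
  ∀ i j : Fin n,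
    (Finset.univ.filter fun k => k ≤ i ∧ j ≤ v k).card ≤
      (Finset.univ.filter fun k => k ≤ i ∧ j ≤ w k).card

/-- Coxeter length = number of inversions. -/
def len {n : ℕ} (v : Equiv.Perm (Fin n)) : ℕ :=
  (Finset.univ.filter fun p : Fin n × Fin n => p.1 < p.2 ∧ v p.2 < v p.1).card

/-- The graph of the Bruhat interval `[v, w]`. -/
def grInt {n : ℕ} (v w : Equiv.Perm (Fin n)) : Set (Fin n × Fin n) :=
  {p | ∃ u : Equiv.Perm (Fin n), bruhatLE v u ∧ bruhatLE u w ∧ u p.1 = p.2}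

/-- `Q` contains an `m × m` square region. -/
def hasSquare {n : ℕ} (Q : Set (Fin n × Fin n)) (m : ℕ) : Prop :=
  ∃ r c : ℕ, r + m ≤ n ∧ c + m ≤ n ∧
    ∀ i j : Fin n, r ≤ (i : ℕ) → (i : ℕ) < r + m → c ≤ (j : ℕ) → (j : ℕ) < c + m →
      (i, j) ∈ Q

/-!
Write `w₀ = Fin.revPerm`. Every permutation lies below `w₀`, so `(i, j) ∈ Γ([v, w₀])` as soon
as some `u ≥ v` has `u i = j`. Right multiplication by the transposition of a non-inversion goes
up in Bruhat order, and at most two such moves bring any value `j` to position `i` whenever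
`(i, j)` is sandwiched between two points `(a, v a)`, `(b, v b)` of the graph of `v`, i.e.
`a ≤ i ≤ b` and `v a ≤ j ≤ v b`. The first and last entries of an occurrence of `12⋯(k+1)` in
`v` are such a pair, and they are at least `k` apart in both coordinates.
-/

lemma StrictMono.apply_zero_add_le {k : ℕ} {g : Fin (k + 1) → ℕ} (hg : StrictMono g)
    (t : Fin (k + 1)) : g 0 + t ≤ g t := by
  induction t using Fin.induction with
  | zero => simp
  | succ t ih =>
    have := hg t.castSucc_lt_succ
    simp only [Fin.val_castSucc] at ih
    simp only [Fin.val_succ]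
    omega

lemma bruhatLE_trans {n : ℕ} {u v w : Perm (Fin n)} (huv : bruhatLE u v) (hvw : bruhatLE v w) :
    bruhatLE u w :=
  fun i j => (huv i j).trans (hvw i j)

lemma bruhatLE_mul_swap {n : ℕ} (w : Perm (Fin n)) {x y : Fin n} (hxy : x < y)
    (hw : w x < w y) : bruhatLE w (w * swap x y) := by
  intro i j
  by_cases hyi : y ≤ i
  · refine card_le_card_of_injOn (swap x y) (fun k hk => ?_) (swap x y).injective.injOn
    simp only [mem_coe, mem_filter, mem_univ, true_and] at hk ⊢
    refine ⟨?_, by simpa using hk.2⟩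
    rw [swap_apply_def]
    split_ifs
    exacts [hyi, hxy.le.trans hyi, hk.1]
  · apply card_le_card
    intro k hk
    simp only [mem_filter, mem_univ, true_and] at hk ⊢
    refine ⟨hk.1, ?_⟩
    rw [Perm.mul_apply]
    have hky : k ≠ y := by rintro rfl; exact hyi hk.1
    rcases eq_or_ne k x with rfl | hkx
    · simpa using hk.2.trans hw.le
    · rw [swap_apply_of_ne_of_ne hkx hky]; exact hk.2

lemma bruhatLE_revPerm {n : ℕ} (u : Perm (Fin n)) : bruhatLE u Fin.revPerm := by
  intro i j
  have hw₀ : (univ.filter fun k : Fin n => k ≤ i ∧ j ≤ Fin.revPerm k) = Iic (min i j.rev) := by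
    ext k
    simp [Fin.le_rev_iff]
  rw [hw₀, Fin.card_Iic, Fin.coe_min, ← Nat.add_min_add_right]
  refine le_min ?_ ?_
  · rw [← Fin.card_Iic]
    exact card_le_card fun k hk => mem_Iic.mpr (mem_filter.mp hk).2.1
  · rw [← Fin.card_Iic]
    refine card_le_card_of_injOn (fun k => (u k).rev) (fun k hk => ?_)
      (fun _ _ _ _ h => u.injective (Fin.rev_injective h))
    simpa using (mem_filter.mp hk).2.2

lemma exists_bruhatLE_apply_eq_of_le_of_lt {n : ℕ} (v : Perm (Fin n)) {a i j : Fin n}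
    (hai : a ≤ i) (haj : v a ≤ j) (hji : j < v i) : ∃ u, bruhatLE v u ∧ u i = j := by
  obtain ⟨s, rfl⟩ := v.surjective j
  rcases lt_or_gt_of_ne (show s ≠ i by rintro rfl; exact hji.false) with hsi | his
  · exact ⟨v * swap s i, bruhatLE_mul_swap v hsi hji, by simp⟩
  · -- `v s` stands right of `i`: first move it to position `a`, then swap it into position `i`.
    have hai' : a < i := lt_of_le_of_ne hai (by rintro rfl; exact (haj.trans_lt hji).false)
    have has : a < s := hai'.trans his
    set v₁ := v * swap a s
    have h₁a : v₁ a = v s := by simp [v₁]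
    have h₁i : v₁ i = v i := by simp [v₁, swap_apply_of_ne_of_ne hai'.ne' his.ne]
    have hv₁ : bruhatLE v v₁ :=
      bruhatLE_mul_swap v has (lt_of_le_of_ne haj (v.injective.ne has.ne))
    exact ⟨v₁ * swap a i, bruhatLE_trans hv₁ (bruhatLE_mul_swap v₁ hai' (by rwa [h₁a, h₁i])),
      by simp [h₁a]⟩

lemma exists_bruhatLE_apply_eq_of_lt_of_le {n : ℕ} (v : Perm (Fin n)) {b i j : Fin n}
    (hib : i ≤ b) (hjb : j ≤ v b) (hij : v i < j) : ∃ u, bruhatLE v u ∧ u i = j := by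
  obtain ⟨s, rfl⟩ := v.surjective j
  rcases lt_or_gt_of_ne (show s ≠ i by rintro rfl; exact hij.false) with hsi | his
  · have hib' : i < b := lt_of_le_of_ne hib (by rintro rfl; exact (hij.trans_le hjb).false)
    have hsb : s < b := hsi.trans hib'
    set v₁ := v * swap s b
    have h₁b : v₁ b = v s := by simp [v₁]
    have h₁i : v₁ i = v i := by simp [v₁, swap_apply_of_ne_of_ne hsi.ne' hib'.ne]
    have hv₁ : bruhatLE v v₁ :=
      bruhatLE_mul_swap v hsb (lt_of_le_of_ne hjb (v.injective.ne hsb.ne))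
    exact ⟨v₁ * swap i b, bruhatLE_trans hv₁ (bruhatLE_mul_swap v₁ hib' (by rwa [h₁b, h₁i])),
      by simp [h₁b]⟩
  · exact ⟨v * swap i s, bruhatLE_mul_swap v his hij, by simp⟩

lemma exists_bruhatLE_apply_eq_of_sandwich {n : ℕ} (v : Perm (Fin n)) {a b i j : Fin n}
    (hai : a ≤ i) (hib : i ≤ b) (haj : v a ≤ j) (hjb : j ≤ v b) :
    ∃ u, bruhatLE v u ∧ u i = j := by
  rcases lt_trichotomy j (v i) with hji | rfl | hij
  · exact exists_bruhatLE_apply_eq_of_le_of_lt v hai haj hji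
  · exact ⟨v, fun _ _ => le_rfl, rfl⟩
  · exact exists_bruhatLE_apply_eq_of_lt_of_le v hib hjb hij

/-- If `v` contains the increasing pattern `12⋯(k+1)`, then `Γ([v, w₀])`
contains a `(k+1) × (k+1)` square region. -/
theorem hasSquare_of_increasing_pattern {n k : ℕ} (v : Equiv.Perm (Fin n))
    (h : ∃ f : Fin (k + 1) → Fin n, StrictMono f ∧
      StrictMono (fun a => v (f a))) :
    hasSquare (grInt v Fin.revPerm) (k + 1) := by
  obtain ⟨f, hf, hvf⟩ := h
  have hrows := (Fin.val_strictMono.comp hf).apply_zero_add_le (Fin.last k)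
  have hcols := (Fin.val_strictMono.comp hvf).apply_zero_add_le (Fin.last k)
  simp only [Function.comp_apply, Fin.val_last] at hrows hcols
  refine ⟨f 0, v (f 0), by omega, by omega, fun i j hi hi' hj hj' => ?_⟩
  obtain ⟨u, hvu, hui⟩ := exists_bruhatLE_apply_eq_of_sandwich v (a := f 0) (b := f (Fin.last k))
    (Fin.le_def.mpr hi) (Fin.le_def.mpr (by omega)) (Fin.le_def.mpr hj) (Fin.le_def.mpr (by omega))
  exact ⟨u, hvu, bruhatLE_revPerm u, hui⟩
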